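/- Let u : ℝ³ → ℍ be differentiable at x with |u(y)| = 1 for every y, let φ : ℝ³ → ℍ be differentiable at x, set ψ(y) = u(y)·φ(y)·u(y)* and a(v) = u(x)*·Du(x)v, and write D_aφ(v) = Dφ(x)v + a(v)·φ(x) − φ(x)·a(v). Then for all v, w ∈ ℝ³: |Dψ(x)v| = |D_aφ(v)| and |Dψ(x)v · Dψ(x)w − Dψ(x)w · Dψ(x)v| = |D_aφ(v) · D_aφ(w) − D_aφ(w) · D_aφ(v)|. (Hence the Faddeev energy densities of ψ and of the pair (a, φ) agree pointwise, giving E(ψ) = E_φ[a].) -/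

import Mathlib

/-!
Differentiating `u u* = 1` gives `D(u*) = -u* (Du) u*`, so the product rule turns
`Dψ = D(u φ u*)` into `u (Dφ + ⁅u* Du, φ⁆) u*`: the derivative of `ψ` is the gauge-covariant
derivative `D_aφ` conjugated by the unit quaternion `u(x)`. Conjugation by a unitary is a
⋆-algebra automorphism which, in a C⋆-ring such as `ℍ`, preserves norms; hence it preserves both
`|D_aφ(v)|` and the norm of the commutator `⁅D_aφ(v), D_aφ(w)⁆`.
-/

open Quaternion

instance : StarModule ℝ ℍ[ℝ] where
  star_smul r q := by rw [star_trivial r, Quaternion.star_smul]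

theorem Quaternion.mem_unitary_of_norm_eq_one {q : ℍ[ℝ]} (hq : ‖q‖ = 1) : q ∈ unitary ℍ[ℝ] := by
  have hnormSq : normSq q = 1 := by rw [normSq_eq_norm_mul_self, hq, one_mul]
  rw [Unitary.mem_iff, star_mul_self, self_mul_star, hnormSq, coe_one]
  exact ⟨rfl, rfl⟩

theorem CStarRing.norm_conjStarAlgAut {S A : Type*} [NormedRing A] [StarRing A] [CStarRing A]
    [SMul S A] [IsScalarTower S A A] [SMulCommClass S A A] (U : unitary A) (q : A) :
    ‖Unitary.conjStarAlgAut S A U q‖ = ‖q‖ := by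
  rw [Unitary.conjStarAlgAut_apply, ← Unitary.coe_star, CStarRing.norm_mul_coe_unitary,
    CStarRing.norm_coe_unitary_mul]

section UnitaryValued

variable {𝕜 E A : Type*} [NontriviallyNormedField 𝕜] [StarRing 𝕜] [TrivialStar 𝕜]
  [NormedAddCommGroup E] [NormedSpace 𝕜 E]
  [NormedRing A] [NormedAlgebra 𝕜 A] [StarRing A] [StarModule 𝕜 A] [ContinuousStar A]
  {u φ : E → A} {x : E}

theorem star_fderiv_of_forall_mem_unitary (hu : DifferentiableAt 𝕜 u x)
    (h_unitary : ∀ y, u y ∈ unitary A) (v : E) :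
    star (fderiv 𝕜 u x v) = -(star (u x) * fderiv 𝕜 u x v * star (u x)) := by
  have h_const : (u * fun y => star (u y)) = fun _ => 1 :=
    funext fun y => Unitary.mul_star_self_of_mem (h_unitary y)
  have h_zero : HasFDerivAt (u * fun y => star (u y)) (0 : E →L[𝕜] A) x :=
    h_const ▸ hasFDerivAt_const 1 x
  have h_deriv := congrArg (· v) ((hu.hasFDerivAt.mul' hu.hasFDerivAt.star).unique h_zero)
  simp only [add_apply, smul_apply, ContinuousLinearMap.comp_apply, ContinuousLinearEquiv.coe_coe,
    starL'_apply, smul_eq_mul, op_smul_eq_mul, zero_apply] at h_deriv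
  rw [eq_neg_iff_add_eq_zero]
  calc star (fderiv 𝕜 u x v) + star (u x) * fderiv 𝕜 u x v * star (u x)
      = star (u x) * (u x * star (fderiv 𝕜 u x v) + fderiv 𝕜 u x v * star (u x)) := by
        rw [mul_add, ← mul_assoc, Unitary.star_mul_self_of_mem (h_unitary x), one_mul, mul_assoc]
    _ = 0 := by rw [h_deriv, mul_zero]

theorem fderiv_mul_mul_star_of_forall_mem_unitary (hu : DifferentiableAt 𝕜 u x)
    (hφ : DifferentiableAt 𝕜 φ x) (h_unitary : ∀ y, u y ∈ unitary A) (v : E) :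
    fderiv 𝕜 (fun y => u y * φ y * star (u y)) x v =
      u x * (fderiv 𝕜 φ x v + ⁅star (u x) * fderiv 𝕜 u x v, φ x⁆) * star (u x) := by
  have h_deriv := ((hu.hasFDerivAt.mul' hφ.hasFDerivAt).mul' hu.hasFDerivAt.star).fderiv
  rw [show (fun y => u y * φ y * star (u y)) = u * φ * fun y => star (u y) from rfl, h_deriv]
  simp only [add_apply, smul_apply, ContinuousLinearMap.comp_apply, ContinuousLinearEquiv.coe_coe,
    starL'_apply, smul_eq_mul, op_smul_eq_mul, Pi.mul_apply,
    star_fderiv_of_forall_mem_unitary hu h_unitary, Ring.lie_def]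
  rw [← one_mul (fderiv 𝕜 u x v * φ x), ← Unitary.mul_star_self_of_mem (h_unitary x)]
  noncomm_ring

end UnitaryValued

/-- For `u : ℝ³ → ℍ` of unit norm and `φ : ℝ³ → ℍ`, both differentiable at `x`,
with `ψ = u φ u*`, `a(v) = u(x)* Du(x)v`, and
`D_aφ(v) = Dφ(x)v + a(v)φ(x) − φ(x)a(v)`, one has `|Dψ(x)v| = |D_aφ(v)|` and
`|Dψ(x)v·Dψ(x)w − Dψ(x)w·Dψ(x)v| = |D_aφ(v)·D_aφ(w) − D_aφ(w)·D_aφ(v)|`: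
the Faddeev energy densities of `ψ` and of `(a, φ)` agree pointwise, giving
`E(ψ) = E_φ[a]`. -/
theorem energy_density_identity (u φ : EuclideanSpace ℝ (Fin 3) → ℍ[ℝ])
    (x : EuclideanSpace ℝ (Fin 3))
    (hu : DifferentiableAt ℝ u x) (hφ : DifferentiableAt ℝ φ x)
    (h_unit : ∀ y, ‖u y‖ = 1)
    (ψ : EuclideanSpace ℝ (Fin 3) → ℍ[ℝ])
    (hψ : ψ = fun y => u y * φ y * star (u y))
    (a : EuclideanSpace ℝ (Fin 3) → ℍ[ℝ])
    (ha : a = fun v => star (u x) * fderiv ℝ u x v)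
    (Daφ : EuclideanSpace ℝ (Fin 3) → ℍ[ℝ])
    (hDaφ : Daφ = fun v => fderiv ℝ φ x v + a v * φ x - φ x * a v)
    (v w : EuclideanSpace ℝ (Fin 3)) :
    ‖fderiv ℝ ψ x v‖ = ‖Daφ v‖ ∧
    ‖fderiv ℝ ψ x v * fderiv ℝ ψ x w - fderiv ℝ ψ x w * fderiv ℝ ψ x v‖ =
      ‖Daφ v * Daφ w - Daφ w * Daφ v‖ := by
  have h_unitary (y) : u y ∈ unitary ℍ[ℝ] := mem_unitary_of_norm_eq_one (h_unit y)
  have h_covariant (z) :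
      fderiv ℝ ψ x z = Unitary.conjStarAlgAut ℝ ℍ[ℝ] ⟨u x, h_unitary x⟩ (Daφ z) := by
    subst hψ hDaφ ha
    simp only [Unitary.conjStarAlgAut_apply,
      fderiv_mul_mul_star_of_forall_mem_unitary hu hφ h_unitary, Ring.lie_def, add_sub_assoc]
  simp only [h_covariant, ← map_mul, ← map_sub, CStarRing.norm_conjStarAlgAut, and_self]
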